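/- arXiv:2406.05480 — 2 statements merged into one kernel-verified Lean document; each statement's English description precedes it below -/
import Mathlib

section
/- Let X be a Priestley space. Then CC(X), equipped with the Vietoris topology and the order ⊴, is an Esakia root system: it is compact; for all C₁, C₂ ∈ CC(X) with C₁ ⋬ C₂ there is a clopen ⊴-upset 𝒰 of CC(X) with C₁ ∈ 𝒰 and C₂ ∉ 𝒰; the ⊴-downset of every clopen subset of CC(X) is clopen; and for every C ∈ CC(X) the set {K | C ⊴ K} is totally ordered by ⊴. -/
open Set TopologicalSpace

/-- The set of nonempty closed chains of a Priestley space `X`. -/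
def CC (X : Type*) [TopologicalSpace X] [Preorder X] : Set (Set X) :=
  {C | C.Nonempty ∧ IsClosed C ∧ IsChain (· ≤ ·) C}

variable {X : Type*} [TopologicalSpace X] [Preorder X]

/-- `□A = {C ∈ CC(X) | C ⊆ A}`. -/
def ccBox (A : Set X) : Set ↥(CC X) := {C | (C : Set X) ⊆ A}

/-- `◇A = {C ∈ CC(X) | C ∩ A ≠ ∅}`. -/
def ccDia (A : Set X) : Set ↥(CC X) := {C | ((C : Set X) ∩ A).Nonempty}

/-- The Vietoris topology on `CC X`, generated by the subbasis `{□V, ◇V | V clopen}`. -/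
instance ccTop : TopologicalSpace ↥(CC X) :=
  generateFrom {S | ∃ V : Set X, IsClopen V ∧ (S = ccBox V ∨ S = ccDia V)}

/-- The order `⊴` on closed chains: `C₁ ⊴ C₂` iff `C₂ ⊆ C₁` and `C₂` is an upset in `C₁`. -/
def lec (C₁ C₂ : Set X) : Prop :=
  C₂ ⊆ C₁ ∧ ∀ x ∈ C₂, ∀ y ∈ C₁, x ≤ y → y ∈ C₂

/-- The `⊴`-downset generated by a collection of closed chains. -/
def ccDown (𝒜 : Set ↥(CC X)) : Set ↥(CC X) := {C | ∃ K ∈ 𝒜, lec (C : Set X) (K : Set X)}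

/-!
`CC(X)` is the continuous image of the closed subspace of nonempty chains of the compact Vietoris
hyperspace `Compacts X`, hence compact. Two chains with `C₁ ⋬ C₂` are separated by a clopen
`⊴`-upset of the form `□W`, or `◇(G ∩ U) ∪ □U` with `U` a clopen upset of `X`, and a compactness
argument turns such a separation into closedness of `⊴`-downsets of closed sets. For openness, a
witness `C ⊴ K ∈ 𝒱` is approximated by the cut `C ∩ U` along a clopen upset `U ⊇ K` of `X` chosen
so that `C ∩ U` stays inside a prescribed clopen `V ⊇ K`; the cut `C' ↦ C' ∩ U` is continuous
on `◇U` and satisfies `C' ⊴ C' ∩ U`. The final segments of a chain are linearly ordered by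
inclusion.
-/

section ClopenSeparated

variable {Z : Type*} [TopologicalSpace Z]

def IsUpperSetFor (r : Z → Z → Prop) (U : Set Z) : Prop :=
  ∀ ⦃a b⦄, r a b → a ∈ U → b ∈ U

/-- The Priestley separation axiom for an arbitrary relation. -/
def ClopenSeparated (r : Z → Z → Prop) : Prop :=
  ∀ ⦃a b⦄, ¬ r a b → ∃ U : Set Z, IsClopen U ∧ IsUpperSetFor r U ∧ a ∈ U ∧ b ∉ U

variable {r : Z → Z → Prop}

theorem ClopenSeparated.exists_isClopen_superset_notMem (hr : ClopenSeparated r) {K : Set Z}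
    (hK : IsCompact K) {b : Z} (hKb : ∀ a ∈ K, ¬ r a b) :
    ∃ U : Set Z, IsClopen U ∧ IsUpperSetFor r U ∧ K ⊆ U ∧ b ∉ U := by
  choose! U hU hUr haU hbU using fun a (ha : a ∈ K) => hr (hKb a ha)
  obtain ⟨t, htK, ht, hKt⟩ := hK.elim_finite_subcover_image (fun a ha => (hU a ha).isOpen)
    fun a ha => mem_biUnion ha (haU a ha)
  refine ⟨⋃ a ∈ t, U a, ht.isClopen_biUnion fun a ha => hU a (htK ha), ?_, hKt, ?_⟩
  · intro x y hxy hx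
    obtain ⟨a, ha, hxa⟩ := mem_iUnion₂.1 hx
    exact mem_biUnion ha (hUr a (htK ha) hxy hxa)
  · intro hb
    obtain ⟨a, ha, hba⟩ := mem_iUnion₂.1 hb
    exact hbU a (htK ha) hba

theorem ClopenSeparated.exists_isClopen_superset_disjoint (hr : ClopenSeparated r) {K F : Set Z}
    (hK : IsCompact K) (hF : IsCompact F) (hKF : ∀ a ∈ K, ∀ b ∈ F, ¬ r a b) :
    ∃ U : Set Z, IsClopen U ∧ IsUpperSetFor r U ∧ K ⊆ U ∧ Disjoint U F := by
  choose! U hU hUr hKU hbU using fun b (hb : b ∈ F) =>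
    hr.exists_isClopen_superset_notMem hK fun a ha => hKF a ha b hb
  obtain ⟨t, htF, ht, hFt⟩ := hF.elim_finite_subcover_image (fun b hb => (hU b hb).compl.isOpen)
    fun b hb => mem_biUnion hb (hbU b hb)
  refine ⟨⋂ b ∈ t, U b, ht.isClopen_biInter fun b hb => hU b (htF hb), ?_,
    subset_iInter₂ fun b hb => hKU b (htF hb), disjoint_left.2 fun x hx hxF => ?_⟩
  · intro x y hxy hx
    exact mem_iInter₂.2 fun b hb => hUr b (htF hb) hxy (mem_iInter₂.1 hx b hb)
  · obtain ⟨b, hb, hxb⟩ := mem_iUnion₂.1 (hFt hxF)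
    exact hxb (mem_iInter₂.1 hx b hb)

theorem ClopenSeparated.isClosed_setOf_exists_rel (hr : ClopenSeparated r) {F : Set Z}
    (hF : IsCompact F) : IsClosed {a | ∃ b ∈ F, r a b} := by
  refine isOpen_compl_iff.1 (isOpen_iff_forall_mem_open.2 fun a ha => ?_)
  obtain ⟨U, hU, hUr, haU, hUF⟩ := hr.exists_isClopen_superset_disjoint isCompact_singleton hF
    (by rintro _ rfl b hb hab; exact ha ⟨b, hb, hab⟩)
  exact ⟨U, fun c hc ⟨b, hb, hcb⟩ => disjoint_left.1 hUF (hUr hcb hc) hb, hU.isOpen, haU rfl⟩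

end ClopenSeparated

theorem clopenSeparated_le [PriestleySpace X] : ClopenSeparated (· ≤ · : X → X → Prop) :=
  fun _ _ h => exists_isClopen_upper_of_not_le h

instance [PriestleySpace X] : ClosedIicTopology X where
  isClosed_Iic y := by
    have := clopenSeparated_le.isClosed_setOf_exists_rel (isCompact_singleton (x := y))
    simp only [mem_singleton_iff, exists_eq_left] at this
    exact this

section FinalSegments

variable {α : Type*} [Preorder α]

theorem lec_inter_of_isUpperSet (C : Set α) {U : Set α} (hU : IsUpperSet U) : lec C (C ∩ U) :=
  ⟨inter_subset_left, fun _ hx _ hy hxy => ⟨hy, hU hxy hx.2⟩⟩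

theorem lec_total_of_lec {C K₁ K₂ : Set α} (hC : IsChain (· ≤ ·) C) (h₁ : lec C K₁)
    (h₂ : lec C K₂) : lec K₁ K₂ ∨ lec K₂ K₁ := by
  by_cases hsub : K₂ ⊆ K₁
  · exact Or.inl ⟨hsub, fun x hx y hy hxy => h₂.2 x hx y (h₁.1 hy) hxy⟩
  · obtain ⟨z, hz₂, hz₁⟩ := not_subset.1 hsub
    have hK₁K₂ : K₁ ⊆ K₂ := fun w hw =>
      (hC.total (h₁.1 hw) (h₂.1 hz₂)).elim (fun hwz => absurd (h₁.2 w hw z (h₂.1 hz₂) hwz) hz₁)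
        fun hzw => h₂.2 z hz₂ w (h₁.1 hw) hzw
    exact Or.inr ⟨hK₁K₂, fun x hx y hy hxy => h₁.2 x hx y (h₂.1 hy) hxy⟩

end FinalSegments

abbrev ccLec (A B : ↥(CC X)) : Prop := lec (A : Set X) (B : Set X)

theorem isChain_setOf_ccLec (C : ↥(CC X)) : IsChain ccLec {K | ccLec C K} :=
  fun _ hK₁ _ hK₂ _ => lec_total_of_lec C.2.2.2 hK₁ hK₂

theorem isUpperSetFor_ccBox (U : Set X) : IsUpperSetFor ccLec (ccBox U) :=
  fun _ _ hAB hA => hAB.1.trans hA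

theorem isUpperSetFor_ccDia_union_ccBox {W U : Set X} (hWU : W ⊆ U) (hU : IsUpperSet U) :
    IsUpperSetFor ccLec (ccDia W ∪ ccBox U) := by
  rintro A B ⟨hBA, hB⟩ (⟨g, hgA, hgW⟩ | hA)
  · by_cases hg : ∃ b ∈ (B : Set X), b ≤ g
    · obtain ⟨b, hb, hbg⟩ := hg
      exact Or.inl ⟨g, hB b hb g hgA hbg, hgW⟩
    · push Not at hg
      exact Or.inr fun b hb =>
        hU ((A.2.2.2.total (hBA hb) hgA).resolve_left (hg b hb)) (hWU hgW)
  · exact Or.inr (hBA.trans hA)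

theorem compl_ccDia (V : Set X) : (ccDia V)ᶜ = ccBox Vᶜ := by
  ext C
  simp [ccDia, ccBox, not_nonempty_iff_eq_empty, ← disjoint_iff_inter_eq_empty,
    subset_compl_iff_disjoint_right]

theorem isOpen_ccBox {V : Set X} (hV : IsClopen V) : IsOpen (ccBox V) :=
  isOpen_generateFrom_of_mem ⟨V, hV, Or.inl rfl⟩

theorem isOpen_ccDia {V : Set X} (hV : IsClopen V) : IsOpen (ccDia V) :=
  isOpen_generateFrom_of_mem ⟨V, hV, Or.inr rfl⟩

theorem isClopen_ccBox {V : Set X} (hV : IsClopen V) : IsClopen (ccBox V) := by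
  refine ⟨?_, isOpen_ccBox hV⟩
  rw [← compl_compl V, ← compl_ccDia]
  exact (isOpen_ccDia hV.compl).isClosed_compl

theorem isClopen_ccDia {V : Set X} (hV : IsClopen V) : IsClopen (ccDia V) := by
  refine ⟨?_, isOpen_ccDia hV⟩
  rw [← compl_compl (ccDia V), compl_ccDia]
  exact (isOpen_ccBox hV.compl).isClosed_compl

theorem isClosed_setOf_isChain_compacts [PriestleySpace X] :
    IsClosed {K : Compacts X | IsChain (· ≤ ·) (K : Set X)} := by
  refine isOpen_compl_iff.1 (isOpen_iff_forall_mem_open.2 fun K hK => ?_)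
  obtain ⟨x, hx, y, hy, -, hxy, hyx⟩ :
      ∃ x ∈ (K : Set X), ∃ y ∈ (K : Set X), x ≠ y ∧ ¬ x ≤ y ∧ ¬ y ≤ x := by
    simpa [IsChain, Set.Pairwise] using hK
  obtain ⟨U, hU, hUup, hxU, hyU⟩ := exists_isClopen_upper_of_not_le hxy
  obtain ⟨U', hU', hU'up, hyU', hxU'⟩ := exists_isClopen_upper_of_not_le hyx
  refine ⟨{L | ((L : Set X) ∩ (U \ U')).Nonempty} ∩ {L | ((L : Set X) ∩ (U' \ U)).Nonempty}, ?_,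
    (Compacts.isOpen_inter_nonempty_of_isOpen (hU.isOpen.sdiff hU'.isClosed)).inter
      (Compacts.isOpen_inter_nonempty_of_isOpen (hU'.isOpen.sdiff hU.isClosed)),
    ⟨x, hx, hxU, hxU'⟩, ⟨y, hy, hyU', hyU⟩⟩
  rintro L ⟨⟨a, ha, haU, haU'⟩, ⟨b, hb, hbU', hbU⟩⟩ hL
  exact (hL.total ha hb).elim (fun hab => hbU (hUup hab haU)) fun hba => haU' (hU'up hba hbU')

def ccInter {U : Set X} (hU : IsClosed U) (C : ↥(ccDia U)) : ↥(CC X) :=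
  ⟨(C : Set X) ∩ U, C.2, C.1.2.2.1.inter hU, C.1.2.2.2.mono inter_subset_left⟩

theorem continuous_ccInter {U : Set X} (hU : IsClopen U) : Continuous (ccInter hU.isClosed) := by
  refine continuous_generateFrom_iff.2 ?_
  rintro _ ⟨V, hV, rfl | rfl⟩
  · have : ccInter hU.isClosed ⁻¹' ccBox V = Subtype.val ⁻¹' ccBox (Uᶜ ∪ V) :=
      ext fun C => inter_subset _ _ _
    rw [this]
    exact (isOpen_ccBox (hU.compl.union hV)).preimage continuous_subtype_val
  · have : ccInter hU.isClosed ⁻¹' ccDia V = Subtype.val ⁻¹' ccDia (U ∩ V) := by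
      ext C
      change ((C.1 : Set X) ∩ U ∩ V).Nonempty ↔ _
      rw [inter_assoc]
      rfl
    rw [this]
    exact (isOpen_ccDia (hU.inter hV)).preimage continuous_subtype_val

theorem exists_isClopen_forall_between_mem {𝒱 : Set ↥(CC X)} (h𝒱 : IsOpen 𝒱) {K : ↥(CC X)}
    (hK : K ∈ 𝒱) : ∃ V : Set X, IsClopen V ∧ (K : Set X) ⊆ V ∧
      ∀ K' : ↥(CC X), (K : Set X) ⊆ K' → (K' : Set X) ⊆ V → K' ∈ 𝒱 := by
  induction h𝒱 generalizing K with
  | basic s hs =>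
    obtain ⟨V, hV, rfl | rfl⟩ := hs
    · exact ⟨V, hV, hK, fun _ _ hK'V => hK'V⟩
    · exact ⟨univ, isClopen_univ, subset_univ _,
        fun _ hKK' _ => hK.mono (inter_subset_inter_left _ hKK')⟩
  | univ => exact ⟨univ, isClopen_univ, subset_univ _, fun _ _ _ => trivial⟩
  | inter s t _ _ ihs iht =>
    obtain ⟨V, hV, hKV, hVs⟩ := ihs hK.1
    obtain ⟨W, hW, hKW, hWt⟩ := iht hK.2
    exact ⟨V ∩ W, hV.inter hW, subset_inter hKV hKW, fun K' hKK' hK'VW =>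
      ⟨hVs K' hKK' (hK'VW.trans inter_subset_left), hWt K' hKK' (hK'VW.trans inter_subset_right)⟩⟩
  | sUnion 𝒮 _ ih =>
    obtain ⟨s, hs, hKs⟩ := hK
    obtain ⟨V, hV, hKV, hVs⟩ := ih s hs hKs
    exact ⟨V, hV, hKV, fun K' hKK' hK'V => ⟨s, hs, hVs K' hKK' hK'V⟩⟩

theorem isOpen_ccDown [PriestleySpace X] [CompactSpace X] {𝒱 : Set ↥(CC X)} (h𝒱 : IsOpen 𝒱) :
    IsOpen (ccDown 𝒱) := by
  refine isOpen_iff_forall_mem_open.2 ?_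
  rintro C ⟨K, hK, hCK⟩
  obtain ⟨V, hV, hKV, hV𝒱⟩ := exists_isClopen_forall_between_mem h𝒱 hK
  have hKF : ∀ k ∈ (K : Set X), ∀ x ∈ (C : Set X) ∩ Vᶜ, ¬ k ≤ x :=
    fun k hk x hx hkx => hx.2 (hKV (hCK.2 k hk x hx.1 hkx))
  obtain ⟨U, hU, hUup, hKU, hUF⟩ := clopenSeparated_le.exists_isClopen_superset_disjoint
    K.2.2.1.isCompact (C.2.2.1.inter hV.compl.isClosed).isCompact hKF
  have hCU : C ∈ ccDia U := K.2.1.mono (subset_inter hCK.1 hKU)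
  refine ⟨Subtype.val '' (ccInter hU.isClosed ⁻¹' 𝒱), ?_,
    (isOpen_ccDia hU).isOpenMap_subtype_val _ ((continuous_ccInter hU).isOpen_preimage _ h𝒱),
    ⟨⟨C, hCU⟩, hV𝒱 _ (subset_inter hCK.1 hKU) fun x hx => ?_, rfl⟩⟩
  · rintro _ ⟨C', hC'𝒱, rfl⟩
    exact ⟨ccInter hU.isClosed C', hC'𝒱, lec_inter_of_isUpperSet _ hUup⟩
  · by_contra hxV
    exact disjoint_left.1 hUF hx.2 ⟨hx.1, hxV⟩

section Priestley

variable {α : Type*} [TopologicalSpace α] [PartialOrder α] [PriestleySpace α] [CompactSpace α]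

instance : CompactSpace ↥(CC α) := by
  set S : Set (Compacts α) := {K | (K : Set α).Nonempty} ∩ {K | IsChain (· ≤ ·) (K : Set α)}
  have hne : IsClosed {K : Compacts α | (K : Set α).Nonempty} := by
    simpa using Compacts.isClosed_inter_nonempty_of_isClosed (isClosed_univ (X := α))
  have hS : IsClosed S := hne.inter isClosed_setOf_isChain_compacts
  have := isCompact_iff_compactSpace.1 hS.isCompact
  let f : S → ↥(CC α) := fun K => ⟨K.1, K.2.1, K.1.isCompact.isClosed, K.2.2⟩
  refine Function.Surjective.compactSpace (f := f) ?_
    fun C => ⟨⟨⟨C, C.2.2.1.isCompact⟩, C.2.1, C.2.2.2⟩, rfl⟩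
  refine continuous_generateFrom_iff.2 ?_
  rintro _ ⟨V, hV, rfl | rfl⟩
  · exact (Compacts.isOpen_subsets_of_isOpen hV.isOpen).preimage continuous_subtype_val
  · exact (Compacts.isOpen_inter_nonempty_of_isOpen hV.isOpen).preimage continuous_subtype_val

theorem clopenSeparated_ccLec : ClopenSeparated (ccLec (X := α)) := by
  intro C₁ C₂ h
  by_cases hsub : (C₂ : Set α) ⊆ C₁
  · obtain ⟨x₀, hx₀, y₀, hy₀, hxy, hy₀C₂⟩ :
        ∃ x ∈ (C₂ : Set α), ∃ y ∈ (C₁ : Set α), x ≤ y ∧ y ∉ (C₂ : Set α) := by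
      simpa [ccLec, lec, hsub] using h
    obtain ⟨G, hG, hy₀G, hGC₂⟩ := compact_exists_isClopen_in_isOpen C₂.2.2.1.isOpen_compl hy₀C₂
    have hy₀F : ∀ a ∈ ({y₀} : Set α), ∀ z ∈ (C₂ : Set α) ∩ Iic y₀, ¬ a ≤ z := by
      rintro _ rfl z ⟨hz, hzy⟩ hyz
      exact hy₀C₂ (le_antisymm hzy hyz ▸ hz)
    obtain ⟨U, hU, hUup, hy₀U, hUF⟩ := clopenSeparated_le.exists_isClopen_superset_disjoint
      isCompact_singleton (C₂.2.2.1.inter isClosed_Iic).isCompact hy₀F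
    refine ⟨ccDia (G ∩ U) ∪ ccBox U, (isClopen_ccDia (hG.inter hU)).union (isClopen_ccBox hU),
      isUpperSetFor_ccDia_union_ccBox inter_subset_right hUup,
      Or.inl ⟨y₀, hy₀, hy₀G, hy₀U rfl⟩, ?_⟩
    rintro (⟨z, hz, hzG, -⟩ | hC₂U)
    · exact hGC₂ hzG hz
    · exact disjoint_left.1 hUF (hC₂U hx₀) ⟨hx₀, hxy⟩
  · obtain ⟨z, hz₂, hz₁⟩ := not_subset.1 hsub
    obtain ⟨G, hG, hzG, hGC₁⟩ := compact_exists_isClopen_in_isOpen C₁.2.2.1.isOpen_compl hz₁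
    exact ⟨ccBox Gᶜ, isClopen_ccBox hG.compl, isUpperSetFor_ccBox _,
      fun x hx hxG => hGC₁ hxG hx, fun hC₂ => hC₂ hz₂ hzG⟩

theorem isClosed_ccDown {𝒱 : Set ↥(CC α)} (h𝒱 : IsClosed 𝒱) : IsClosed (ccDown 𝒱) :=
  clopenSeparated_ccLec.isClosed_setOf_exists_rel h𝒱.isCompact

end Priestley
/-- `CC(X)` with the Vietoris topology and the order `⊴` is an Esakia root system:
compact, Priestley-separated by clopen `⊴`-upsets, the `⊴`-downset of every clopen is
clopen, and the set of `⊴`-successors of every point is a chain. -/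
theorem stmt6 (X : Type*) [TopologicalSpace X] [PartialOrder X] [CompactSpace X]
    [PriestleySpace X] :
    CompactSpace ↥(CC X) ∧
    (∀ C₁ C₂ : ↥(CC X), ¬ lec (C₁ : Set X) (C₂ : Set X) →
      ∃ 𝒰 : Set ↥(CC X), IsClopen 𝒰 ∧
        (∀ A ∈ 𝒰, ∀ B : ↥(CC X), lec (A : Set X) (B : Set X) → B ∈ 𝒰) ∧
        C₁ ∈ 𝒰 ∧ C₂ ∉ 𝒰) ∧
    (∀ 𝒱 : Set ↥(CC X), IsClopen 𝒱 → IsClopen (ccDown 𝒱)) ∧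
    (∀ C : ↥(CC X),
      IsChain (fun K₁ K₂ : ↥(CC X) => lec (K₁ : Set X) (K₂ : Set X))
        {K : ↥(CC X) | lec (C : Set X) (K : Set X)}) := by
  refine ⟨inferInstance, fun C₁ C₂ h => ?_,
    fun 𝒱 h𝒱 => ⟨isClosed_ccDown h𝒱.isClosed, isOpen_ccDown h𝒱.isOpen⟩, isChain_setOf_ccLec⟩
  obtain ⟨𝒰, h𝒰, h𝒰up, hC₁, hC₂⟩ := clopenSeparated_ccLec h
  exact ⟨𝒰, h𝒰, fun A hA B hAB => h𝒰up hAB hA, hC₁, hC₂⟩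
end

section
/- Let X be a Priestley space and C ∈ CC(X). Then the map x ↦ ↑x ∩ C is a bijection from C onto the set {K ∈ CC(X) | C ⊴ K}. Consequently, for every natural number n ≥ 1, C has cardinality at most n if and only if {K ∈ CC(X) | C ⊴ K} has cardinality at most n. -/
open Set TopologicalSpace

variable {X : Type*} [TopologicalSpace X] [Preorder X]

lemma priestley_isClosed_Ici {Y : Type*} [TopologicalSpace Y] [Preorder Y]
    [PriestleySpace Y] (x : Y) : IsClosed (Ici x) := by
  rw [← isOpen_compl_iff]
  rw [isOpen_iff_forall_mem_open]
  intro y hy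
  obtain ⟨U, hU, hUup, hxU, hyU⟩ := exists_isClopen_upper_of_not_le hy
  exact ⟨Uᶜ, fun z hz hz' => hz (hUup hz' hxU), hU.compl.isOpen, hyU⟩

lemma priestley_isClosed_Iic {Y : Type*} [TopologicalSpace Y] [Preorder Y]
    [PriestleySpace Y] (x : Y) : IsClosed (Iic x) := by
  rw [← isOpen_compl_iff]
  rw [isOpen_iff_forall_mem_open]
  intro y hy
  obtain ⟨U, hU, hUup, hyU, hxU⟩ := exists_isClopen_upper_of_not_le hy
  exact ⟨U, fun z hz hz' => hxU (hUup hz' hz), hU.isOpen, hyU⟩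

/-- The map `x ↦ ↑x ∩ C` is a bijection from `C` onto `{K ∈ CC(X) | C ⊴ K}`;
consequently `C` has at most `n` elements iff `{K ∈ CC(X) | C ⊴ K}` does. -/
theorem stmt9 (X : Type*) [TopologicalSpace X] [PartialOrder X] [CompactSpace X]
    [PriestleySpace X] (C : Set X) (hC : C ∈ CC X) :
    Set.BijOn (fun x => Ici x ∩ C) C {K | K ∈ CC X ∧ lec C K} ∧
    ∀ n : ℕ, 1 ≤ n →
      (C.encard ≤ (n : ℕ∞) ↔ {K | K ∈ CC X ∧ lec C K}.encard ≤ (n : ℕ∞)) := by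
  obtain ⟨hCne, hCcl, hCch⟩ := hC
  have hbij : Set.BijOn (fun x => Ici x ∩ C) C {K | K ∈ CC X ∧ lec C K} := by
    refine ⟨?_, ?_, ?_⟩
    · intro x hx
      refine ⟨⟨⟨x, le_refl x, hx⟩, (priestley_isClosed_Ici x).inter hCcl,
        hCch.mono inter_subset_right⟩, inter_subset_right,
        fun a ha y hy hay => ⟨le_trans ha.1 hay, hy⟩⟩
    · intro x hx y hy hxy
      have hxy' : Ici x ∩ C = Ici y ∩ C := hxy
      have hxm : x ∈ Ici y ∩ C := hxy' ▸ ⟨le_refl x, hx⟩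
      have hym : y ∈ Ici x ∩ C := hxy'.symm ▸ ⟨le_refl y, hy⟩
      exact le_antisymm hym.1 hxm.1
    · rintro K ⟨⟨hKne, hKcl, hKch⟩, hKC, hKup⟩
      -- K has a least element
      have : Nonempty K := hKne.to_subtype
      have hmin : (⋂ k : K, (Iic (k : X) ∩ K)).Nonempty := by
        apply IsCompact.nonempty_iInter_of_directed_nonempty_isCompact_isClosed
        · intro i j
          rcases hKch.total i.2 j.2 with h | h
          · exact ⟨i, Subset.rfl, fun z hz => ⟨le_trans hz.1 h, hz.2⟩⟩
          · exact ⟨j, fun z hz => ⟨le_trans hz.1 h, hz.2⟩, Subset.rfl⟩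
        · exact fun i => ⟨i, le_refl _, i.2⟩
        · exact fun i => ((priestley_isClosed_Iic _).inter hKcl).isCompact
        · exact fun i => (priestley_isClosed_Iic _).inter hKcl
      obtain ⟨x, hx⟩ := hmin
      simp only [mem_iInter, mem_inter_iff] at hx
      have hxK : x ∈ K := (hx ⟨_, hKne.some_mem⟩).2
      have hxle : ∀ k ∈ K, x ≤ k := fun k hk => (hx ⟨k, hk⟩).1
      refine ⟨x, hKC hxK, ?_⟩
      apply Subset.antisymm
      · rintro y ⟨hy1, hy2⟩
        exact hKup x hxK y hy2 hy1
      · intro k hk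
        exact ⟨hxle k hk, hKC hk⟩
  refine ⟨hbij, fun n _ => ?_⟩
  have : {K | K ∈ CC X ∧ lec C K} = (fun x => Ici x ∩ C) '' C := hbij.image_eq.symm
  rw [this, Set.InjOn.encard_image hbij.injOn]
end
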